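/- Let (A_n)_{n∈ℕ} be a decreasing sequence of nonempty, internal, sharply bounded subsets of R̃^d, and for each n let (A_{n,ε})_ε be a sharply bounded representative of A_n. Let (u_ε)_{ε∈(0,1)} be a net of maps ℝ^d → ℂ. Then the net (u_ε(x_ε))_ε is moderate for every representative (x_ε)_ε of every point of ⋂_{n∈ℕ} A_n if and only if there exists N ∈ ℕ such that sup_{x ∈ A_{N,ε} + ε^N} |u_ε(x)| ≤ ε^{-N} for all sufficiently small ε, where A + r denotes {x ∈ ℝ^d : d(x,A) ≤ r}. -/

import Mathlib

open Real Set Metric MeasureTheory Filter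

noncomputable section

/-- `P ε` holds for all sufficiently small `ε ∈ (0,1)`. -/
def EvSmall (P : ℝ → Prop) : Prop :=
  ∃ ε₀ : ℝ, 0 < ε₀ ∧ ε₀ < 1 ∧ ∀ ε : ℝ, 0 < ε → ε ≤ ε₀ → P ε

/-- A net `(u_ε)` with values in a seminormed group is moderate. -/
def Moderate {E : Type*} [SeminormedAddGroup E] (u : ℝ → E) : Prop :=
  ∃ N : ℕ, EvSmall fun ε => ‖u ε‖ ≤ ε ^ (-(N : ℝ))

/-- A net `(u_ε)` is negligible. -/
def Negligible {E : Type*} [SeminormedAddGroup E] (u : ℝ → E) : Prop :=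
  ∀ m : ℕ, EvSmall fun ε => ‖u ε‖ ≤ ε ^ (m : ℝ)

/-- Two nets represent the same generalized point. -/
def EqvNet {E : Type*} [SeminormedAddGroup E] (x y : ℝ → E) : Prop :=
  Negligible fun ε => x ε - y ε

/-- The set of generalized points of `Ẽ` (modelled as the moderate nets). -/
def GenPt (E : Type*) [SeminormedAddGroup E] : Set (ℝ → E) := {x | Moderate x}

/-- `x` is a representative of some generalized point belonging to `A`. -/
def IsReprOfPointOf {E : Type*} [SeminormedAddGroup E] (A : Set (ℝ → E)) (x : ℝ → E) : Prop :=
  Moderate x ∧ ∃ a ∈ A, EqvNet x a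

/-- The sharp norm `e^{-v(x)}` of a (moderate) net. -/
noncomputable def sharpNorm {E : Type*} [SeminormedAddGroup E] (x : ℝ → E) : ℝ :=
  sInf {r : ℝ | ∃ b : ℝ, r = Real.exp (-b) ∧ EvSmall fun ε => ‖x ε‖ ≤ ε ^ b}

/-- `A` is open for the sharp topology (as a set of generalized points). -/
def SharpOpen {E : Type*} [SeminormedAddGroup E] (A : Set (ℝ → E)) : Prop :=
  (∀ x ∈ A, Moderate x) ∧
  ∀ x ∈ A, ∃ r > 0, ∀ y : ℝ → E, Moderate y →
    sharpNorm (fun ε => y ε - x ε) < r → y ∈ A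

/-- `B` is a sharp neighbourhood of `A`. -/
def IsSharpNbhdOf {E : Type*} [SeminormedAddGroup E] (B A : Set (ℝ → E)) : Prop :=
  A ⊆ B ∧ ∀ x ∈ A, ∃ r > 0, ∀ y : ℝ → E, Moderate y →
    sharpNorm (fun ε => y ε - x ε) < r → y ∈ B

/-- The internal set with representative `(Aε)`. -/
def InternalSet {E : Type*} [SeminormedAddGroup E] (Aε : ℝ → Set E) : Set (ℝ → E) :=
  {x | Moderate x ∧ ∃ y : ℝ → E, EqvNet x y ∧ EvSmall fun ε => y ε ∈ Aε ε}

/-- `(Aε)` is a sharply bounded representative. -/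
def SharplyBddRep {E : Type*} [SeminormedAddGroup E] (Aε : ℝ → Set E) : Prop :=
  ∃ M : ℕ, EvSmall fun ε => ∀ x ∈ Aε ε, ‖x‖ ≤ ε ^ (-(M : ℝ))

/-- A set of generalized points is sharply bounded. -/
def SharplyBddSet {E : Type*} [SeminormedAddGroup E] (A : Set (ℝ → E)) : Prop :=
  ∃ C : ℝ, ∀ x ∈ A, sharpNorm x ≤ C

/-- The interleaved closure of a set of generalized points. -/
def interleaved {E : Type*} [SeminormedAddGroup E] (A : Set (ℝ → E)) : Set (ℝ → E) :=
  {x | ∃ (m : ℕ) (S : Fin m → Set ℝ) (y : Fin m → ℝ → E),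
    (∀ ε ∈ Set.Ioo (0:ℝ) 1, ∃! j, ε ∈ S j) ∧ (∀ j, y j ∈ A) ∧
    ∀ ε ∈ Set.Ioo (0:ℝ) 1, ∀ j, ε ∈ S j → x ε = y j ε}

/-- A net of smooth functions (smooth for each ε ∈ (0,1)). -/
def SmoothNet {V : Type*} [NormedAddCommGroup V] [NormedSpace ℝ V] (u : ℝ → V → ℂ) : Prop :=
  ∀ ε : ℝ, 0 < ε → ε < 1 → ContDiff ℝ (⊤ : ℕ∞) (u ε)

/-- The nets belonging to `E_M(A)` : all derivatives are moderate along the points of `A`. -/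
def EMod {V : Type*} [NormedAddCommGroup V] [NormedSpace ℝ V]
    (A : Set (ℝ → V)) (u : ℝ → V → ℂ) : Prop :=
  SmoothNet u ∧ ∀ (n : ℕ) (x : ℝ → V), IsReprOfPointOf A x →
    Moderate fun ε => iteratedFDeriv ℝ n (u ε) (x ε)

/-- The nets belonging to `N(A)` : all derivatives are negligible along the points of `A`. -/
def NNeg {V : Type*} [NormedAddCommGroup V] [NormedSpace ℝ V]
    (A : Set (ℝ → V)) (u : ℝ → V → ℂ) : Prop :=
  SmoothNet u ∧ ∀ (n : ℕ) (x : ℝ → V), IsReprOfPointOf A x →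
    Negligible fun ε => iteratedFDeriv ℝ n (u ε) (x ε)

/-- `u` and `v` define the same element of `G̃(A)`. -/
def GEq {V : Type*} [NormedAddCommGroup V] [NormedSpace ℝ V]
    (A : Set (ℝ → V)) (u v : ℝ → V → ℂ) : Prop :=
  NNeg A fun ε z => u ε z - v ε z

/-- `x̃ ≤ ỹ` in `R̃` (for the given representatives). -/
def RleNet (x y : ℝ → ℝ) : Prop := ∀ m : ℕ, EvSmall fun ε => x ε ≤ y ε + ε ^ (m : ℝ)

/-- `x̃ ≫ 0` in `R̃`. -/
def StrPosNet (x : ℝ → ℝ) : Prop := ∃ m : ℕ, EvSmall fun ε => ε ^ (m : ℝ) ≤ x ε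

/-- `x̃ ≪ ỹ` in `R̃`. -/
def RltlNet (x y : ℝ → ℝ) : Prop := StrPosNet fun ε => y ε - x ε

/-- The operator `∂̄ = ½(∂ₓ + i ∂_y)` on smooth functions `ℂ → ℂ`. -/
def dbar (u : ℂ → ℂ) (z : ℂ) : ℂ :=
  (fderiv ℝ u z 1 + Complex.I * fderiv ℝ u z Complex.I) / 2

/-- The iterated derivative `D^k u = ∂ₓ^k u`. -/
def Dpow : ℕ → (ℂ → ℂ) → ℂ → ℂ
  | 0, u => u
  | (k+1), u => Dpow k fun z => fderiv ℝ u z 1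

/-- `u ∈ G̃_H(A)` : generalized holomorphic functions on `A ⊆ C̃`. -/
def GHol (A : Set (ℝ → ℂ)) (u : ℝ → ℂ → ℂ) : Prop :=
  EMod A u ∧ NNeg A fun ε => dbar (u ε)

/-- A continuous, piecewise `C¹` function on `[0,1]` (with its partition). -/
structure PwC1Path where
  toFun : ℝ → ℂ
  n : ℕ
  pt : Fin (n + 1) → ℝ
  mono : Monotone pt
  first : pt 0 = 0
  last : pt (Fin.last n) = 1
  cont : ContinuousOn toFun (Set.Icc 0 1)
  piece : ∀ i : Fin n, ContDiffOn ℝ 1 toFun (Set.Icc (pt i.castSucc) (pt i.succ))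

/-- A net of piecewise `C¹` paths which is moderate for the `C¹_pw` norm. -/
def PathModerate (γ : ℝ → PwC1Path) : Prop :=
  (∃ N : ℕ, EvSmall fun ε => ∀ t ∈ Set.Icc (0:ℝ) 1, ‖(γ ε).toFun t‖ ≤ ε ^ (-(N:ℝ))) ∧
  (∃ N : ℕ, EvSmall fun ε => ∀ᵐ t ∂(volume.restrict (Set.Icc (0:ℝ) 1)),
      ‖deriv (γ ε).toFun t‖ ≤ ε ^ (-(N:ℝ)))

/-- Two nets of paths represent the same generalized path
(their difference is negligible for the `C¹_pw` norm). -/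
def PathEqv (γ γ' : ℝ → PwC1Path) : Prop :=
  ∀ m : ℕ, EvSmall fun ε =>
    (∀ t ∈ Set.Icc (0:ℝ) 1, ‖(γ ε).toFun t - (γ' ε).toFun t‖ ≤ ε ^ (m:ℝ)) ∧
    (∀ᵐ t ∂(volume.restrict (Set.Icc (0:ℝ) 1)),
      ‖deriv (γ ε).toFun t - deriv (γ' ε).toFun t‖ ≤ ε ^ (m:ℝ))

/-- `γ` is a (generalized) path in `A ⊆ C̃`. -/
def PathIn (A : Set (ℝ → ℂ)) (γ : ℝ → PwC1Path) : Prop :=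
  PathModerate γ ∧ ∀ t : ℝ → ℝ, (∀ ε, t ε ∈ Set.Icc (0:ℝ) 1) →
    IsReprOfPointOf A fun ε => (γ ε).toFun (t ε)

/-- The complex path integral `∫_γ u(z) dz` along a piecewise `C¹` path. -/
noncomputable def pathIntegral (γ : PwC1Path) (u : ℂ → ℂ) : ℂ :=
  ∑ i : Fin γ.n, ∫ t in (γ.pt i.castSucc)..(γ.pt i.succ),
    u (γ.toFun t) * derivWithin γ.toFun (Set.Icc (γ.pt i.castSucc) (γ.pt i.succ)) t

/-- The path is closed: `γ(0) = γ(1)` as generalized points. -/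
def ClosedPath (γ : ℝ → PwC1Path) : Prop :=
  Negligible fun ε => (γ ε).toFun 1 - (γ ε).toFun 0

/-- A continuous, piecewise `C¹` function on `[0,1]²` (with its grid partition). -/
structure PwC1Homotopy where
  toFun : ℝ × ℝ → ℂ
  n : ℕ
  pt : Fin (n + 1) → ℝ
  mono : Monotone pt
  first : pt 0 = 0
  last : pt (Fin.last n) = 1
  cont : ContinuousOn toFun (Set.Icc 0 1 ×ˢ Set.Icc 0 1)
  piece : ∀ i j : Fin n, ContDiffOn ℝ 1 toFun
    (Set.Icc (pt i.castSucc) (pt i.succ) ×ˢ Set.Icc (pt j.castSucc) (pt j.succ))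

/-- A moderate net of piecewise `C¹` functions on the square. -/
def HomotopyModerate (H : ℝ → PwC1Homotopy) : Prop :=
  (∃ N : ℕ, EvSmall fun ε => ∀ p ∈ (Set.Icc (0:ℝ) 1 ×ˢ Set.Icc (0:ℝ) 1),
      ‖(H ε).toFun p‖ ≤ ε ^ (-(N:ℝ))) ∧
  (∃ N : ℕ, EvSmall fun ε =>
      ∀ᵐ p ∂(volume.restrict ((Set.Icc (0:ℝ) 1 ×ˢ Set.Icc (0:ℝ) 1) : Set (ℝ × ℝ))),
      ‖fderiv ℝ (H ε).toFun p‖ ≤ ε ^ (-(N:ℝ)))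

/-- `H` is a homotopy in `A` between the closed paths `γ` and `γ'`. -/
def IsHomotopyBetween (A : Set (ℝ → ℂ)) (γ γ' : ℝ → PwC1Path)
    (H : ℝ → PwC1Homotopy) : Prop :=
  HomotopyModerate H ∧
  (∀ t : ℝ → ℝ, (∀ ε, t ε ∈ Set.Icc (0:ℝ) 1) →
    (Negligible fun ε => (H ε).toFun (t ε, 0) - (γ ε).toFun (t ε)) ∧
    (Negligible fun ε => (H ε).toFun (t ε, 1) - (γ' ε).toFun (t ε))) ∧
  (∀ s : ℝ → ℝ, (∀ ε, s ε ∈ Set.Icc (0:ℝ) 1) →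
    Negligible fun ε => (H ε).toFun (0, s ε) - (H ε).toFun (1, s ε)) ∧
  (∀ t s : ℝ → ℝ, (∀ ε, t ε ∈ Set.Icc (0:ℝ) 1) → (∀ ε, s ε ∈ Set.Icc (0:ℝ) 1) →
    IsReprOfPointOf A fun ε => (H ε).toFun (t ε, s ε))

/-!
If the bound fails at every level `N`, there are arbitrarily small scales `ε` and points of
`A_{N,ε} + ε^N` where `|u_ε| > ε^{-N}`. Internal sets are exactly the moderate nets with
`x_ε ∈ A_ε + ε^m` for small `ε`, for every `m`; by saturation this also gives
`A_{N,ε} ⊆ A_{n,ε} + ε^N` for `n ≤ N` and small `ε`. A diagonal level function `L(ε) → ∞`,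
equal to `N` at a bad scale for level `N`, then lets us pick `x_ε ∈ A_{L(ε),ε} + ε^{L(ε)}`, bad
whenever possible: this net lies in every `A_n`, but `u_ε(x_ε)` is not moderate. The converse
follows directly from the same characterization of internal sets.
-/

open Topology

theorem evSmall_iff_eventually {P : ℝ → Prop} : EvSmall P ↔ ∀ᶠ ε in 𝓝[>] (0:ℝ), P ε := by
  constructor
  · rintro ⟨ε₀, hε₀, -, hP⟩
    filter_upwards [Ioo_mem_nhdsGT hε₀] with ε hε using hP ε hε.1 hε.2.le
  · intro h
    obtain ⟨ε₁, hε₁, hP⟩ := mem_nhdsGT_iff_exists_Ioc_subset.1 h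
    refine ⟨min ε₁ (1/2), lt_min hε₁ (by norm_num), by linarith [min_le_right ε₁ (1/2)],
      fun ε hε hεle => hP ⟨hε, hεle.trans (min_le_left _ _)⟩⟩

theorem eventually_pos_le_half : ∀ᶠ ε in 𝓝[>] (0:ℝ), 0 < ε ∧ ε ≤ 1/2 := by
  filter_upwards [Ioo_mem_nhdsGT (show (0:ℝ) < 1/2 by norm_num)] with ε hε using ⟨hε.1, hε.2.le⟩

theorem two_mul_rpow_le_of_lt {ε : ℝ} (hε : 0 < ε) (hε₂ : ε ≤ 1/2) {m k : ℕ} (hmk : m < k) :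
    2 * ε ^ (k : ℝ) ≤ ε ^ (m : ℝ) := by
  simp only [Real.rpow_natCast]
  have hk : ε ^ k ≤ ε ^ (m + 1) := pow_le_pow_of_le_one hε.le (by linarith) hmk
  have hm := pow_pos hε m
  rw [pow_succ] at hk
  nlinarith

theorem mem_cthickening_of_mem_cthickening_of_subset {E : Type*} [PseudoMetricSpace E]
    {x : E} {s t : Set E} {δ δ' : ℝ} (hδ : 0 ≤ δ) (hδ' : 0 ≤ δ')
    (hx : x ∈ cthickening δ s) (hst : s ⊆ cthickening δ' t) :
    x ∈ cthickening (δ + δ') t :=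
  cthickening_cthickening_subset hδ hδ' t (cthickening_subset_of_subset δ hst hx)

theorem exists_eventually_mem_and_mem_of_inter_nonempty {α β : Type*} {l : Filter α} [l.NeBot]
    {S T : α → Set β} (hT : ∀ᶠ a in l, (T a).Nonempty) :
    ∃ f : α → β, ∀ᶠ a in l, f a ∈ T a ∧ ((S a ∩ T a).Nonempty → f a ∈ S a) := by
  refine Eventually.choice (r := fun a b => b ∈ T a ∧ ((S a ∩ T a).Nonempty → b ∈ S a))
    (hT.mono fun a ⟨b, hb⟩ => ?_)
  by_cases h : (S a ∩ T a).Nonempty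
  · exact ⟨h.some, h.some_mem.2, fun _ => h.some_mem.1⟩
  · exact ⟨b, hb, fun h' => absurd h' h⟩

theorem exists_level {P : ℕ → ℝ → Prop} (hP : ∀ m, ∀ᶠ ε in 𝓝[>] (0:ℝ), P m ε) :
    ∃ L : ℝ → ℕ, Tendsto L (𝓝[>] 0) atTop ∧ ∀ᶠ ε in 𝓝[>] 0, P (L ε) ε := by
  classical
  refine ⟨fun ε => Nat.findGreatest (P · ε) ⌈ε⁻¹⌉₊, tendsto_atTop.2 fun m => ?_, ?_⟩
  · have hm : ∀ᶠ ε in 𝓝[>] (0:ℝ), m ≤ ⌈ε⁻¹⌉₊ :=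
      (tendsto_nat_ceil_atTop.comp tendsto_inv_nhdsGT_zero).eventually_ge_atTop m
    filter_upwards [hP m, hm] with ε h1 h2 using Nat.le_findGreatest h2 h1
  · filter_upwards [hP 0] with ε h0 using Nat.findGreatest_spec (P := (P · ε)) (Nat.zero_le _) h0

theorem exists_level_frequently {P B : ℕ → ℝ → Prop} (hP : ∀ m, ∀ᶠ ε in 𝓝[>] (0:ℝ), P m ε)
    (hB : ∀ m, ∃ᶠ ε in 𝓝[>] (0:ℝ), B m ε) :
    ∃ L : ℝ → ℕ, Tendsto L (𝓝[>] 0) atTop ∧ (∀ᶠ ε in 𝓝[>] 0, P (L ε) ε) ∧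
      ∃ᶠ ε in 𝓝[>] 0, B (L ε) ε := by
  classical
  obtain ⟨L₀, hL₀, hPL₀⟩ := exists_level hP
  -- Pick scales `f m → 0` with `B m (f m)` and `P m (f m)`, and let `L` take the value `m` there.
  have hwit : ∀ m : ℕ, ∃ ε, (B m ε ∧ P m ε) ∧ ε ∈ Ioo 0 (1 / ((m : ℝ) + 1)) := fun m =>
    (((hB m).and_eventually (hP m)).and_eventually
      (Ioo_mem_nhdsGT (by positivity : (0:ℝ) < 1 / ((m : ℝ) + 1)))).exists
  choose f hfBP hf using hwit
  have hf_tendsto : Tendsto f atTop (𝓝[>] 0) :=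
    tendsto_nhdsWithin_iff.2 ⟨squeeze_zero (fun m => (hf m).1.le) (fun m => (hf m).2.le)
      tendsto_one_div_add_atTop_nhds_zero_nat, Eventually.of_forall fun m => (hf m).1⟩
  let L : ℝ → ℕ := fun ε => if h : ∃ m, f m = ε then h.choose else L₀ ε
  have hLf : ∀ ε, (∃ m, f m = ε) → f (L ε) = ε := fun ε h => by
    simp only [L, dif_pos h]
    exact h.choose_spec
  refine ⟨L, tendsto_atTop.2 fun K => ?_, ?_, ?_⟩
  · have hlt : ∀ᶠ ε in 𝓝[>] (0:ℝ), ∀ m ∈ Iio K, ε < f m :=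
      (eventually_all_finite (finite_Iio K)).2 fun m _ =>
        eventually_nhdsWithin_of_eventually_nhds (eventually_lt_nhds (hf m).1)
    filter_upwards [hlt, tendsto_atTop.1 hL₀ K] with ε hε hK
    by_cases h : ∃ m, f m = ε
    · by_contra! hLK
      exact (hε _ hLK).ne (hLf ε h).symm
    · simpa [L, h] using hK
  · filter_upwards [hPL₀] with ε hε
    by_cases h : ∃ m, f m = ε
    · simpa only [hLf ε h] using (hfBP (L ε)).2
    · simpa [L, h] using hε
  · refine hf_tendsto.frequently (Frequently.of_forall fun m => ?_)
    simpa only [hLf _ ⟨m, rfl⟩] using (hfBP (L (f m))).1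

section

variable {E : Type*} [SeminormedAddCommGroup E]

theorem SharplyBddRep.moderate_of_eventually_mem_cthickening {Aε : ℝ → Set E} {x : ℝ → E}
    (hA : SharplyBddRep Aε) (hx : ∀ᶠ ε in 𝓝[>] (0:ℝ), x ε ∈ cthickening 1 (Aε ε)) :
    Moderate x := by
  obtain ⟨M, hM⟩ := hA
  refine ⟨M + 1, evSmall_iff_eventually.2 ?_⟩
  filter_upwards [evSmall_iff_eventually.1 hM, hx,
    Ioo_mem_nhdsGT (show (0:ℝ) < 1/3 by norm_num)] with ε hMε hxε hε
  obtain ⟨a, ha, hxa⟩ := mem_thickening_iff.1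
    (cthickening_subset_thickening' two_pos one_lt_two _ hxε)
  have hpow : ε ^ (-((M + 1 : ℕ) : ℝ)) = ε ^ (-(M : ℝ)) * ε⁻¹ := by
    rw [← Real.rpow_neg_one, ← Real.rpow_add hε.1]; push_cast; ring_nf
  have h1 : 1 ≤ ε ^ (-(M : ℝ)) :=
    Real.one_le_rpow_of_pos_of_le_one_of_nonpos hε.1 (by linarith [hε.2]) (by simp)
  have h3 : 3 ≤ ε⁻¹ := by rw [le_inv_comm₀ (by norm_num) hε.1]; linarith [hε.2]
  calc ‖x ε‖ ≤ ‖a‖ + dist (x ε) a := by rw [dist_eq_norm]; exact norm_le_norm_add_norm_sub' (x ε) a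
    _ ≤ ε ^ (-(M : ℝ)) + 2 := add_le_add (hMε a ha) hxa.le
    _ ≤ ε ^ (-(M : ℝ)) * ε⁻¹ := by nlinarith
    _ = ε ^ (-((M + 1 : ℕ) : ℝ)) := hpow.symm

theorem mem_internalSet_iff {Aε : ℝ → Set E} {x : ℝ → E} :
    x ∈ InternalSet Aε ↔ Moderate x ∧
      ∀ m : ℕ, ∀ᶠ ε in 𝓝[>] (0:ℝ), x ε ∈ cthickening (ε ^ (m : ℝ)) (Aε ε) := by
  constructor
  · rintro ⟨hx, y, hxy, hy⟩
    refine ⟨hx, fun m => ?_⟩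
    filter_upwards [evSmall_iff_eventually.1 (hxy m), evSmall_iff_eventually.1 hy]
      with ε hxyε hyε
    exact mem_cthickening_of_dist_le _ _ _ _ hyε (by rwa [dist_eq_norm])
  · rintro ⟨hx, hnear⟩
    obtain ⟨L, hL, hxL⟩ := exists_level hnear
    have hclose : ∀ᶠ ε in 𝓝[>] (0:ℝ), ∃ a, a ∈ Aε ε ∧ dist (x ε) a < 2 * ε ^ (L ε : ℝ) := by
      filter_upwards [hxL, self_mem_nhdsWithin] with ε hε hε0
      have hpos : 0 < ε ^ (L ε : ℝ) := Real.rpow_pos_of_pos hε0 _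
      exact mem_thickening_iff.1
        (cthickening_subset_thickening' (by positivity) (by linarith) _ hε)
    obtain ⟨y, hy⟩ := hclose.choice
    refine ⟨hx, y, fun m => evSmall_iff_eventually.2 ?_,
      evSmall_iff_eventually.2 (hy.mono fun ε h => h.1)⟩
    filter_upwards [hy, eventually_pos_le_half, tendsto_atTop.1 hL (m + 1)] with ε hyε hε hLε
    rw [← dist_eq_norm]
    exact hyε.2.le.trans (two_mul_rpow_le_of_lt hε.1 hε.2 hLε)

theorem IsReprOfPointOf.mem_internalSet {Aε : ℝ → Set E} {x : ℝ → E}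
    (hx : IsReprOfPointOf (InternalSet Aε) x) : x ∈ InternalSet Aε := by
  obtain ⟨hxmod, a, ha, hxa⟩ := hx
  refine mem_internalSet_iff.2 ⟨hxmod, fun m => ?_⟩
  filter_upwards [(mem_internalSet_iff.1 ha).2 (m + 1), evSmall_iff_eventually.1 (hxa (m + 1)),
    eventually_pos_le_half] with ε haε hxaε hε
  have hpos : 0 ≤ ε ^ ((m + 1 : ℕ) : ℝ) := Real.rpow_nonneg hε.1.le _
  refine cthickening_mono ?_ _ (mem_cthickening_of_mem_cthickening_of_subset hpos hpos
    (mem_cthickening_of_dist_le (x ε) (a ε) _ {a ε} rfl (by rwa [dist_eq_norm]))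
    (Set.singleton_subset_iff.2 haε))
  linarith [two_mul_rpow_le_of_lt hε.1 hε.2 (Nat.lt_succ_self m)]

theorem eventually_subset_cthickening_of_internalSet_subset {Aε Bε : ℝ → Set E}
    (hbd : SharplyBddRep Aε) (hne : (InternalSet Aε).Nonempty)
    (hsub : InternalSet Aε ⊆ InternalSet Bε) (m : ℕ) :
    ∀ᶠ ε in 𝓝[>] (0:ℝ), Aε ε ⊆ cthickening (ε ^ (m : ℝ)) (Bε ε) := by
  obtain ⟨-, -, y, -, hy⟩ := hne
  -- Test the inclusion at a point of `Aε ε` which is far from `Bε ε` whenever there is one.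
  obtain ⟨z, hz⟩ := exists_eventually_mem_and_mem_of_inter_nonempty
    (S := fun ε => (cthickening (ε ^ (m : ℝ)) (Bε ε))ᶜ)
    ((evSmall_iff_eventually.1 hy).mono fun ε hyε => ⟨y ε, hyε⟩)
  have hzA : ∀ k : ℕ, ∀ᶠ ε in 𝓝[>] (0:ℝ), z ε ∈ cthickening (ε ^ (k : ℝ)) (Aε ε) :=
    fun k => hz.mono fun ε h => self_subset_cthickening _ h.1
  have hzB := (mem_internalSet_iff.1 (hsub (mem_internalSet_iff.2
    ⟨hbd.moderate_of_eventually_mem_cthickening (by simpa using hzA 0), hzA⟩))).2 m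
  filter_upwards [hz, hzB] with ε hzε hzBε c hc
  by_contra hcB
  exact hzε.2 ⟨c, hcB, hc⟩ hzBε

theorem mem_internalSet_of_level {Aε : ℕ → ℝ → Set E} {L : ℝ → ℕ} {x : ℝ → E}
    (hbd : SharplyBddRep (Aε 0)) (hL : Tendsto L (𝓝[>] 0) atTop)
    (hx : ∀ᶠ ε in 𝓝[>] (0:ℝ), x ε ∈ cthickening (ε ^ (L ε : ℝ)) (Aε (L ε) ε))
    (hnest : ∀ᶠ ε in 𝓝[>] (0:ℝ),
      ∀ n ≤ L ε, Aε (L ε) ε ⊆ cthickening (ε ^ (L ε : ℝ)) (Aε n ε))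
    (n : ℕ) : x ∈ InternalSet (Aε n) := by
  have hnear : ∀ n m : ℕ,
      ∀ᶠ ε in 𝓝[>] (0:ℝ), x ε ∈ cthickening (ε ^ (m : ℝ)) (Aε n ε) := by
    intro n m
    filter_upwards [hx, hnest, eventually_pos_le_half, tendsto_atTop.1 hL (max n (m + 1))]
      with ε hxε hnestε hε hLε
    have hpos : 0 ≤ ε ^ (L ε : ℝ) := Real.rpow_nonneg hε.1.le _
    refine cthickening_mono ?_ _ (mem_cthickening_of_mem_cthickening_of_subset hpos hpos
      hxε (hnestε n (le_of_max_le_left hLε)))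
    linarith [two_mul_rpow_le_of_lt hε.1 hε.2 (Nat.lt_of_succ_le (le_of_max_le_right hLε))]
  exact mem_internalSet_iff.2
    ⟨hbd.moderate_of_eventually_mem_cthickening (by simpa using hnear 0 0), hnear n⟩

theorem eventually_nonempty_and_subset_cthickening {Aε : ℕ → ℝ → Set E}
    (hanti : Antitone fun n => InternalSet (Aε n)) (hne : ∀ n, (InternalSet (Aε n)).Nonempty)
    (hbd : ∀ n, SharplyBddRep (Aε n)) (N : ℕ) :
    ∀ᶠ ε in 𝓝[>] (0:ℝ), (Aε N ε).Nonempty ∧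
      ∀ n ≤ N, Aε N ε ⊆ cthickening (ε ^ (N : ℝ)) (Aε n ε) := by
  obtain ⟨-, -, y, -, hy⟩ := hne N
  exact ((evSmall_iff_eventually.1 hy).mono fun ε h => ⟨y ε, h⟩).and
    ((eventually_all_finite (finite_Iic N)).2 fun n hn =>
      eventually_subset_cthickening_of_internalSet_subset (hbd N) (hne N) (hanti hn) N)

theorem exists_forall_mem_internalSet_not_moderate {F : Type*} [SeminormedAddGroup F]
    {Aε : ℕ → ℝ → Set E} {u : ℝ → E → F} (hbd : SharplyBddRep (Aε 0))
    (hnest : ∀ N : ℕ, ∀ᶠ ε in 𝓝[>] (0:ℝ), (Aε N ε).Nonempty ∧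
      ∀ n ≤ N, Aε N ε ⊆ cthickening (ε ^ (N : ℝ)) (Aε n ε))
    (hbad : ∀ N : ℕ, ∃ᶠ ε in 𝓝[>] (0:ℝ),
      ∃ c ∈ cthickening (ε ^ (N : ℝ)) (Aε N ε), ε ^ (-(N : ℝ)) < ‖u ε c‖) :
    ∃ x : ℝ → E, (∀ n, x ∈ InternalSet (Aε n)) ∧ ¬ Moderate fun ε => u ε (x ε) := by
  obtain ⟨L, hL, hnestL, hbadL⟩ := exists_level_frequently hnest hbad
  obtain ⟨x, hx⟩ := exists_eventually_mem_and_mem_of_inter_nonempty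
    (S := fun ε => {c | ε ^ (-(L ε : ℝ)) < ‖u ε c‖})
    (hnestL.mono fun ε hε => hε.1.mono (self_subset_cthickening _))
  refine ⟨x, mem_internalSet_of_level hbd hL (hx.mono fun ε h => h.1)
    (hnestL.mono fun ε h => h.2), ?_⟩
  rintro ⟨K, hK⟩
  obtain ⟨ε, ⟨c, hc, hcu⟩, ⟨hxε, hKε⟩, hε, huε⟩ := (hbadL.and_eventually ((hx.and
    (tendsto_atTop.1 hL K)).and (eventually_pos_le_half.and (evSmall_iff_eventually.1 hK)))).exists
  have hpow : ε ^ (-(K : ℝ)) ≤ ε ^ (-(L ε : ℝ)) :=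
    Real.rpow_le_rpow_of_exponent_ge hε.1 (by linarith [hε.2]) (by simpa using hKε)
  linarith [show ε ^ (-(L ε : ℝ)) < ‖u ε (x ε)‖ from hxε.2 ⟨c, hcu, hc⟩]

end

/-- Lemma 3.3 (uniform moderateness on a decreasing intersection of internal sets). -/
theorem moderate_uniform_on_intersection (d : ℕ)
    (A : ℕ → Set (ℝ → EuclideanSpace ℝ (Fin d)))
    (Aε : ℕ → ℝ → Set (EuclideanSpace ℝ (Fin d)))
    (hA : ∀ n, A n = InternalSet (Aε n))
    (hne : ∀ n, (A n).Nonempty)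
    (hdec : ∀ n, A (n + 1) ⊆ A n)
    (hbd : ∀ n, SharplyBddRep (Aε n))
    (u : ℝ → EuclideanSpace ℝ (Fin d) → ℂ) :
    (∀ x : ℝ → EuclideanSpace ℝ (Fin d), IsReprOfPointOf (⋂ n, A n) x →
        Moderate fun ε => u ε (x ε)) ↔
      ∃ N : ℕ, EvSmall fun ε =>
        ∀ x ∈ Metric.cthickening (ε ^ (N : ℝ)) (Aε N ε), ‖u ε x‖ ≤ ε ^ (-(N : ℝ)) := by
  obtain rfl : A = fun n => InternalSet (Aε n) := funext hA
  constructor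
  · intro hmod
    by_contra! hbound
    have hbad : ∀ N : ℕ, ∃ᶠ ε in 𝓝[>] (0:ℝ),
        ∃ c ∈ cthickening (ε ^ (N : ℝ)) (Aε N ε), ε ^ (-(N : ℝ)) < ‖u ε c‖ := by
      intro N
      simpa [evSmall_iff_eventually, not_eventually] using hbound N
    obtain ⟨x, hxA, hx⟩ := exists_forall_mem_internalSet_not_moderate (hbd 0)
      (eventually_nonempty_and_subset_cthickening (antitone_nat_of_succ_le hdec) hne hbd) hbad
    refine hx (hmod x ⟨(hxA 0).1, x, mem_iInter.2 hxA, fun m => evSmall_iff_eventually.2 ?_⟩)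
    filter_upwards [self_mem_nhdsWithin] with ε hε
    simpa only [sub_self, norm_zero] using Real.rpow_nonneg (le_of_lt hε) _
  · rintro ⟨N, hN⟩ x ⟨hxmod, a, ha, hxa⟩
    have hxN : x ∈ InternalSet (Aε N) :=
      IsReprOfPointOf.mem_internalSet ⟨hxmod, a, mem_iInter.1 ha N, hxa⟩
    refine ⟨N, evSmall_iff_eventually.2 ?_⟩
    filter_upwards [evSmall_iff_eventually.1 hN, (mem_internalSet_iff.1 hxN).2 N]
      with ε hNε hxε using hNε _ hxε

end
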